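/- arXiv:1808.08484 — 2 statements merged into one kernel-verified Lean document; each statement's English description precedes it below -/
import Mathlib

section
/- Define operators T_a on V^{⊗n} over K = ℂ(q) by: T_a(v_𝐢) = (q−q⁻¹)v_𝐢 + (−1)^{ī_a ī_{a+1}} v_{𝐢 s_a} if i_a < i_{a+1}; T_a(v_𝐢) = ((q−q⁻¹) + (−1)^{ī_a}(q+q⁻¹))/2 · v_𝐢 if i_a = i_{a+1}; and T_a(v_𝐢) = (−1)^{ī_a ī_{a+1}} v_{𝐢 s_a} if i_a > i_{a+1}. Then each T_a satisfies the quadratic Hecke relation T_a² = (q−q⁻¹)T_a + 1. -/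
namespace SSW

/-- Tuples indexing basis vectors of the `n`-fold tensor power of a space with
basis indexed by `Fin N`. -/
abbrev Tup (N n : ℕ) := Fin n → Fin N

/-- The `n`-fold tensor power `V^{⊗ n}` of the superspace `V` with homogeneous basis
`v_1, …, v_N`, realised as the free `K`-module on the set of index tuples. -/
abbrev Ten (K : Type*) [Semiring K] (N n : ℕ) : Type _ := Tup N n →₀ K

/-- The basis vector `v_𝐢 = v_{i_1} ⊗ ⋯ ⊗ v_{i_n}`. -/
noncomputable def bv (K : Type*) [Semiring K] {N n : ℕ} (i : Tup N n) : Ten K N n :=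
  Finsupp.single i 1

/-- The position (0-indexed) of the `a`-th tensor factor (1-indexed), clamped. -/
def fpos (n : ℕ) (hn : 0 < n) (a : ℕ) : Fin n := ⟨min (a - 1) (n - 1), by omega⟩

/-- The `a`-th entry (1-indexed) `i_a` of a tuple `𝐢`. -/
def ent {N n : ℕ} (hn : 0 < n) (i : Tup N n) (a : ℕ) : Fin N := i (fpos n hn a)

/-- The tuple `𝐢 s_a`, with entries `i_a` and `i_{a+1}` interchanged. -/
def swapT {N n : ℕ} (hn : 0 < n) (a : ℕ) (i : Tup N n) : Tup N n :=
  i ∘ Equiv.swap (fpos n hn a) (fpos n hn (a + 1))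

/-- `(-1)^x` for a parity `x ∈ ℤ/2`. -/
def sgn (K : Type*) [Ring K] (x : ZMod 2) : K := if x = 1 then -1 else 1

/-- The parity function of `ℂ^{k|ℓ}`: `ī = 0` for `i ≤ k`, `ī = 1` for `i > k`. -/
def hookPar (k l : ℕ) : Fin (k + l) → ZMod 2 := fun i => if (i : ℕ) < k then 0 else 1

/-- The sign permutation operator `s_a` on `V^{⊗n}` (paper convention: `1 ≤ a ≤ n-1`). -/
noncomputable def sOp (K : Type*) [Field K] {N n : ℕ} (hn : 0 < n)
    (par : Fin N → ZMod 2) (a : ℕ) : Module.End K (Ten K N n) :=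
  Finsupp.lift (Ten K N n) K (Tup N n) fun i =>
    if ent hn i a = ent hn i (a + 1) then
      sgn K (par (ent hn i a)) • bv K i
    else
      sgn K (par (ent hn i a) * par (ent hn i (a + 1))) • bv K (swapT hn a i)

/-- The super Hecke operator `T_a` on `V^{⊗n}` (paper convention: `1 ≤ a ≤ n-1`). -/
noncomputable def TOp (K : Type*) [Field K] (q : K) {N n : ℕ} (hn : 0 < n)
    (par : Fin N → ZMod 2) (a : ℕ) : Module.End K (Ten K N n) :=
  Finsupp.lift (Ten K N n) K (Tup N n) fun i =>
    if ent hn i a < ent hn i (a + 1) then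
      (q - q⁻¹) • bv K i +
        sgn K (par (ent hn i a) * par (ent hn i (a + 1))) • bv K (swapT hn a i)
    else if ent hn i a = ent hn i (a + 1) then
      (((q - q⁻¹) + sgn K (par (ent hn i a)) * (q + q⁻¹)) / 2) • bv K i
    else
      sgn K (par (ent hn i a) * par (ent hn i (a + 1))) • bv K (swapT hn a i)

/-- The inverse `T_a⁻¹ = T_a - (q - q⁻¹)` of the Hecke operator `T_a`. -/
noncomputable def Tinv (K : Type*) [Field K] (q : K) {N n : ℕ} (hn : 0 < n)
    (par : Fin N → ZMod 2) (a : ℕ) : Module.End K (Ten K N n) :=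
  TOp K q hn par a - (q - q⁻¹) • 1

/-- The operator `S_a`: acts as `T_a` when the colors of the `a`-th and `(a+1)`-th
factors agree, and as the signed swap `s_a` otherwise. -/
noncomputable def SOp (K : Type*) [Field K] (q : K) {N n m : ℕ} (hn : 0 < n)
    (par : Fin N → ZMod 2) (col : Fin N → Fin m) (a : ℕ) : Module.End K (Ten K N n) :=
  Finsupp.lift (Ten K N n) K (Tup N n) fun i =>
    if col (ent hn i a) = col (ent hn i (a + 1)) then TOp K q hn par a (bv K i)
    else sOp K hn par a (bv K i)

/-- The inverse `S_a⁻¹` of `S_a`. -/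
noncomputable def Sinv (K : Type*) [Field K] (q : K) {N n m : ℕ} (hn : 0 < n)
    (par : Fin N → ZMod 2) (col : Fin N → Fin m) (a : ℕ) : Module.End K (Ten K N n) :=
  Finsupp.lift (Ten K N n) K (Tup N n) fun i =>
    if col (ent hn i a) = col (ent hn i (a + 1)) then Tinv K q hn par a (bv K i)
    else sOp K hn par a (bv K i)

/-- The operator `S_0 : v_𝐢 ↦ Q_{c_1(𝐢)} v_𝐢`. -/
noncomputable def S0op (K : Type*) [Field K] {N n m : ℕ} (hn : 0 < n)
    (col : Fin N → Fin m) (Q : Fin m → K) : Module.End K (Ten K N n) :=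
  Finsupp.lift (Ten K N n) K (Tup N n) fun i => Q (col (ent hn i 1)) • bv K i

/-- `θ = S_{n-1} ⋯ S_1`. -/
noncomputable def thetaOp (K : Type*) [Field K] (q : K) {N n m : ℕ} (hn : 0 < n)
    (par : Fin N → ZMod 2) (col : Fin N → Fin m) : Module.End K (Ten K N n) :=
  (((List.range (n - 1)).reverse).map fun t => SOp K q hn par col (t + 1)).prod

/-- `T_0 = T_1⁻¹ ⋯ T_{n-1}⁻¹ θ S_0`. -/
noncomputable def T0op (K : Type*) [Field K] (q : K) {N n m : ℕ} (hn : 0 < n)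
    (par : Fin N → ZMod 2) (col : Fin N → Fin m) (Q : Fin m → K) :
    Module.End K (Ten K N n) :=
  (((List.range (n - 1)).map fun t => Tinv K q hn par (t + 1)).prod) *
    thetaOp K q hn par col * S0op K hn col Q


section Aux

variable {K : Type*} [Field K] {N n : ℕ}

lemma lift_bv (f : Tup N n → Ten K N n) (i : Tup N n) :
    Finsupp.lift (Ten K N n) K (Tup N n) f (bv K i) = f i := by
  simp [bv, Finsupp.lift_apply, Finsupp.sum_single_index]

lemma TOp_bv (q : K) (hn : 0 < n) (par : Fin N → ZMod 2) (a : ℕ) (i : Tup N n) :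
    TOp K q hn par a (bv K i) =
    if ent hn i a < ent hn i (a + 1) then
      (q - q⁻¹) • bv K i +
        sgn K (par (ent hn i a) * par (ent hn i (a + 1))) • bv K (swapT hn a i)
    else if ent hn i a = ent hn i (a + 1) then
      (((q - q⁻¹) + sgn K (par (ent hn i a)) * (q + q⁻¹)) / 2) • bv K i
    else
      sgn K (par (ent hn i a) * par (ent hn i (a + 1))) • bv K (swapT hn a i) := by
  unfold TOp
  exact lift_bv _ i

lemma ent_swapT_left (hn : 0 < n) (a : ℕ) (i : Tup N n) :
    ent hn (swapT hn a i) a = ent hn i (a + 1) := by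
  simp [ent, swapT, Equiv.swap_apply_left]

lemma ent_swapT_right (hn : 0 < n) (a : ℕ) (i : Tup N n) :
    ent hn (swapT hn a i) (a + 1) = ent hn i a := by
  simp [ent, swapT, Equiv.swap_apply_right]

lemma swapT_swapT (hn : 0 < n) (a : ℕ) (i : Tup N n) :
    swapT hn a (swapT hn a i) = i := by
  funext j
  simp [swapT, Equiv.swap_apply_self]

lemma sgn_sq (x : ZMod 2) : sgn K x * sgn K x = 1 := by
  unfold sgn
  split_ifs <;> ring

end Aux

/-- each operator `T_a` (`1 ≤ a < n`) on `V^{⊗n}` satisfies the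
quadratic Hecke relation `T_a² = (q − q⁻¹) T_a + 1`. -/
theorem stmt4 (K : Type*) [Field K] [CharZero K] (q : K) (hq : q ≠ 0)
    {N n : ℕ} (hn : 0 < n) (par : Fin N → ZMod 2)
    (a : ℕ) (ha : 1 ≤ a) (han : a < n) :
    TOp K q hn par a * TOp K q hn par a = (q - q⁻¹) • TOp K q hn par a + 1 := by
  have hqq : q * q⁻¹ = 1 := mul_inv_cancel₀ hq
  refine Finsupp.lhom_ext' fun i => LinearMap.ext_ring ?_
  simp only [LinearMap.comp_apply, Finsupp.lsingle_apply, Module.End.mul_apply,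
    LinearMap.add_apply, LinearMap.smul_apply, Module.End.one_apply]
  have hb : Finsupp.single i (1 : K) = bv K i := rfl
  rw [hb, TOp_bv]
  split_ifs with h1 h2
  · -- i_a < i_{a+1}
    rw [map_add, map_smul, map_smul, TOp_bv, TOp_bv, if_pos h1,
      ent_swapT_left, ent_swapT_right, if_neg (not_lt.2 h1.le), if_neg h1.ne',
      swapT_swapT, mul_comm (par (ent hn i (a + 1)))]
    rw [smul_smul, sgn_sq, one_smul]
  · -- i_a = i_{a+1}
    set s : K := sgn K (par (ent hn i a)) with hs
    have hss : s * s = 1 := sgn_sq _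
    set c : K := ((q - q⁻¹) + s * (q + q⁻¹)) / 2 with hc
    have key : c * c = (q - q⁻¹) * c + 1 := by
      rw [hc]
      linear_combination ((q + q⁻¹) ^ 2 / 4) * hss + hqq
    rw [map_smul, TOp_bv, if_neg h1, if_pos h2, smul_smul, key, add_smul, one_smul, mul_smul]
  · -- i_a > i_{a+1}
    rw [map_smul, TOp_bv, ent_swapT_left, ent_swapT_right,
      if_pos (lt_of_le_of_ne (not_lt.1 h1) (Ne.symm h2)),
      swapT_swapT, mul_comm (par (ent hn i (a + 1)))]
    rw [smul_add, smul_smul, smul_smul, sgn_sq, one_smul, mul_comm _ (q - q⁻¹), ← smul_smul]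

end SSW
end

section
/- The complex reflection group W_{m,n} of type G(m,1,n), presented by generators s_0, s_1,…,s_{n−1} with relations s_0^m = 1, s_i² = 1 (1 ≤ i ≤ n−1), s_0s_1s_0s_1 = s_1s_0s_1s_0, s_is_j = s_js_i for |i−j|>1, and s_is_{i+1}s_i = s_{i+1}s_is_{i+1}, is isomorphic to the wreath product (ℤ/mℤ)^n ⋊ S_n, where S_n acts by permuting the n copies of ℤ/mℤ. -/
/-!
The generators are sent to the wreath product by `s_0 ↦ (e_0, 1)` and `s_k ↦ (0, (k-1 k))`.
For the inverse, the conjugates `t_j = s_j ⋯ s_1 s_0 s_1 ⋯ s_j` commute pairwise and satisfy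
`t_j ^ m = 1`, so they define a homomorphism from `(ℤ/mℤ)^n`, on which `s_k` acts by conjugation
as the transposition `(k-1 k)`. For the permutation part one uses the Coxeter presentation of
`S_n`: a word for `σ` is produced by repeatedly stripping a left descent, and the commutation and
braid relations make the result independent of the descents chosen (a diamond argument, by
induction on the number of inversions). Then `(x, σ) ↦ t^x · word(σ)` is a section of the map
to the wreath product which is compatible with left multiplication by the generators, hence an
inverse.
-/

namespace SSW

/-- The defining relators of the complex reflection group `W_{m,n}` of type
`G(m,1,n)`, on generators `s_0, s_1, …, s_{n−1}`: `s_0^m = 1`, `s_i² = 1` for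
`1 ≤ i ≤ n−1`, `s_0s_1s_0s_1 = s_1s_0s_1s_0`, `s_is_j = s_js_i` for `|i−j| > 1`,
and the braid relations `s_is_{i+1}s_i = s_{i+1}s_is_{i+1}` for `1 ≤ i`. -/
def Wrels (m n : ℕ) : Set (FreeGroup (Fin n)) :=
  {w | (∃ h : 0 < n, w = FreeGroup.of (⟨0, h⟩ : Fin n) ^ m) ∨
    (∃ i : Fin n, 0 < (i : ℕ) ∧ w = FreeGroup.of i ^ 2) ∨
    (∃ h : 1 < n,
      w = FreeGroup.of (⟨0, by omega⟩ : Fin n) * FreeGroup.of (⟨1, h⟩ : Fin n) *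
          FreeGroup.of (⟨0, by omega⟩ : Fin n) * FreeGroup.of (⟨1, h⟩ : Fin n) *
          (FreeGroup.of (⟨1, h⟩ : Fin n) * FreeGroup.of (⟨0, by omega⟩ : Fin n) *
            FreeGroup.of (⟨1, h⟩ : Fin n) * FreeGroup.of (⟨0, by omega⟩ : Fin n))⁻¹) ∨
    (∃ i j : Fin n, (i : ℕ) + 1 < (j : ℕ) ∧
      w = FreeGroup.of i * FreeGroup.of j * (FreeGroup.of j * FreeGroup.of i)⁻¹) ∨
    (∃ i j : Fin n, 0 < (i : ℕ) ∧ (j : ℕ) = (i : ℕ) + 1 ∧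
      w = FreeGroup.of i * FreeGroup.of j * FreeGroup.of i *
          (FreeGroup.of j * FreeGroup.of i * FreeGroup.of j)⁻¹)}

/-- The action of `S_n` on `(ℤ/mℤ)^n` by permuting the `n` coordinates. -/
def permAct (m n : ℕ) : Equiv.Perm (Fin n) →* MulAut (Fin n → Multiplicative (ZMod m)) where
  toFun σ :=
    { toEquiv := Equiv.arrowCongr σ (Equiv.refl (Multiplicative (ZMod m)))
      map_mul' := fun f g => rfl }
  map_one' := by ext f x; rfl
  map_mul' := fun σ τ => by ext f x; rfl

theorem _root_.MonoidHom.leftInverse_of_map_mul_generators {G H : Type*} [Group G] [Group H]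
    (f : G →* H) {S : Set G} (hS : Subgroup.closure S = ⊤) {ρ : H → G} (h1 : ρ 1 = 1)
    (hρ : ∀ s ∈ S, ∀ h, ρ (f s * h) = s * ρ h) : Function.LeftInverse ρ f := by
  let K : Subgroup G :=
    { carrier := {g | ∀ h, ρ (f g * h) = g * ρ h}
      mul_mem' := fun {a b} ha hb h => by rw [map_mul, mul_assoc, ha (f b * h), hb, mul_assoc]
      one_mem' := fun h => by simp
      inv_mem' := fun {g} hg h => by
        rw [eq_inv_mul_iff_mul_eq, ← hg, map_inv, mul_inv_cancel_left] }
  have hK : Subgroup.closure S ≤ K := (Subgroup.closure_le K).2 hρ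
  intro g
  have hg : ρ (f g * 1) = g * ρ 1 := (hS ▸ hK) (Subgroup.mem_top g) 1
  rwa [mul_one, h1, mul_one] at hg

section AdjacentTranspositions

variable {n : ℕ}

def prev (k : Fin n) : Fin n := ⟨k - 1, by omega⟩

/-- The image of the generator `s_k` for `1 ≤ k`. -/
def tau (k : Fin n) : Equiv.Perm (Fin n) := Equiv.swap (prev k) k

@[simp] lemma val_prev (k : Fin n) : (prev k : ℕ) = k - 1 := rfl

lemma tau_apply_self (k : Fin n) : tau k k = prev k := Equiv.swap_apply_right _ _

lemma tau_apply_prev (k : Fin n) : tau k (prev k) = k := Equiv.swap_apply_left _ _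

lemma tau_apply_of_ne {k j : Fin n} (h1 : (j : ℕ) ≠ k - 1) (h2 : (j : ℕ) ≠ k) :
    tau k j = j :=
  Equiv.swap_apply_of_ne_of_ne (fun h => h1 (by simp [h])) (fun h => h2 (by simp [h]))

@[simp] lemma tau_mul_self (k : Fin n) : tau k * tau k = 1 := Equiv.swap_mul_self _ _

@[simp] lemma tau_inv (k : Fin n) : (tau k)⁻¹ = tau k := Equiv.swap_inv _ _

lemma val_tau_apply {k : Fin n} (hk : 1 ≤ (k : ℕ)) (j : Fin n) :
    (tau k j : ℕ) =
      if (j : ℕ) = k then (k : ℕ) - 1 else if (j : ℕ) = k - 1 then (k : ℕ) else j := by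
  by_cases h1 : (j : ℕ) = k
  · rw [Fin.ext h1, tau_apply_self, if_pos rfl]; rfl
  by_cases h2 : (j : ℕ) = k - 1
  · rw [show j = prev k from Fin.ext h2, tau_apply_prev, if_neg (by simp; omega),
      if_pos (val_prev k)]
  · rw [tau_apply_of_ne h2 h1, if_neg h1, if_neg h2]

lemma tau_lt_tau {k : Fin n} (hk : 1 ≤ (k : ℕ)) {u v : Fin n} (huv : u < v)
    (hne : ¬((u : ℕ) = k - 1 ∧ (v : ℕ) = k)) : tau k u < tau k v := by
  rw [Fin.lt_def, val_tau_apply hk, val_tau_apply hk]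
  rw [Fin.lt_def] at huv
  split_ifs <;> omega

lemma tau_mul_tau_comm {p q : Fin n} (hp : 1 ≤ (p : ℕ)) (hpq : (p : ℕ) + 1 < q) :
    tau p * tau q = tau q * tau p := by
  refine Equiv.ext fun j => ?_
  simp only [Equiv.Perm.mul_apply, Fin.ext_iff, val_tau_apply hp,
    val_tau_apply (show 1 ≤ (q : ℕ) by omega)]
  split_ifs <;> omega

lemma tau_braid {p q : Fin n} (hp : 1 ≤ (p : ℕ)) (hpq : (q : ℕ) = p + 1) :
    tau p * tau q * tau p = tau q * tau p * tau q := by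
  have hq : prev q = p := Fin.ext (by simp [hpq])
  have hqp : q ≠ p := fun h => by simp [h] at hpq
  have hqp' : q ≠ prev p := fun h => by simp [Fin.ext_iff] at h; omega
  have hpp : prev p ≠ p := fun h => by simp [Fin.ext_iff] at h; omega
  simp only [tau, hq]
  rw [Equiv.swap_comm (prev p), ← Equiv.swap_comm q p, Equiv.swap_mul_swap_mul_swap hqp hqp',
    Equiv.swap_comm q p, Equiv.swap_comm p (prev p), Equiv.swap_mul_swap_mul_swap hpp hqp'.symm,
    Equiv.swap_comm]

end AdjacentTranspositions

section Descents

variable {n : ℕ}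

def inversions (σ : Equiv.Perm (Fin n)) : Finset (Fin n × Fin n) :=
  Finset.univ.filter fun p => p.1 < p.2 ∧ σ p.2 < σ p.1

/-- The values `k - 1` and `k` appear in the wrong order in the one-line notation of `σ`, so
that `tau k * σ` has one inversion less. -/
def IsLeftDescent (σ : Equiv.Perm (Fin n)) (k : Fin n) : Prop :=
  1 ≤ (k : ℕ) ∧ σ⁻¹ k < σ⁻¹ (prev k)

@[simp] lemma mem_inversions {σ : Equiv.Perm (Fin n)} {p : Fin n × Fin n} :
    p ∈ inversions σ ↔ p.1 < p.2 ∧ σ p.2 < σ p.1 := by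
  simp [inversions]

lemma inv_tau_mul_apply (k : Fin n) (σ : Equiv.Perm (Fin n)) (j : Fin n) :
    (tau k * σ)⁻¹ j = σ⁻¹ (tau k j) := by
  rw [mul_inv_rev, tau_inv]; rfl

lemma card_inversions_tau_mul_lt {σ : Equiv.Perm (Fin n)} {k : Fin n} (hd : IsLeftDescent σ k) :
    (inversions (tau k * σ)).card < (inversions σ).card := by
  obtain ⟨hk, hdesc⟩ := hd
  have hprev : prev k < k := Fin.lt_def.2 (by simp; omega)
  apply Finset.card_lt_card
  refine (Finset.ssubset_iff_of_subset fun p hp => ?_).2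
    ⟨(σ⁻¹ k, σ⁻¹ (prev k)), ?_, ?_⟩
  · simp only [mem_inversions, Equiv.Perm.mul_apply] at hp ⊢
    refine ⟨hp.1, lt_of_not_ge fun hle => ?_⟩
    have hlt : σ p.1 < σ p.2 := hle.lt_of_ne (σ.injective.ne hp.1.ne)
    by_cases hpair : (σ p.1 : ℕ) = k - 1 ∧ (σ p.2 : ℕ) = k
    · have h1 : p.1 = σ⁻¹ (prev k) := σ.eq_symm_apply.2 (Fin.ext (by simp [hpair.1]))
      have h2 : p.2 = σ⁻¹ k := σ.eq_symm_apply.2 (Fin.ext hpair.2)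
      rw [h1, h2] at hp
      exact hp.1.not_gt hdesc
    · exact (tau_lt_tau hk hlt hpair).not_gt hp.2
  · simpa using ⟨hdesc, hprev⟩
  · simpa [tau_apply_self, tau_apply_prev] using fun _ => hprev.le

lemma IsLeftDescent.ne_one {σ : Equiv.Perm (Fin n)} {k : Fin n} (hd : IsLeftDescent σ k) :
    σ ≠ 1 := by
  rintro rfl
  have := Fin.lt_def.1 hd.2
  simp at this
  omega

lemma exists_isLeftDescent {σ : Equiv.Perm (Fin n)} (h : σ ≠ 1) :
    ∃ k, IsLeftDescent σ k := by
  by_contra! hc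
  obtain _ | n := n
  · exact h (Subsingleton.elim _ _)
  have hmono : StrictMono (σ⁻¹ : Equiv.Perm (Fin (n + 1))) := by
    refine Fin.strictMono_iff_lt_succ.2 fun i => ?_
    have hprev : prev i.succ = i.castSucc := Fin.ext (by simp)
    have hle := not_lt.1 ((not_and.1 (hc i.succ)) (by simp))
    rw [hprev] at hle
    exact hle.lt_of_ne (σ⁻¹.injective.ne (Fin.castSucc_lt_succ (i := i)).ne)
  exact h (inv_eq_one.1 (Equiv.ext fun j => congrFun hmono.eq_id j))

lemma isLeftDescent_tau_mul {σ : Equiv.Perm (Fin n)} {k : Fin n} (hk : 1 ≤ (k : ℕ))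
    (hd : ¬IsLeftDescent σ k) : IsLeftDescent (tau k * σ) k := by
  refine ⟨hk, ?_⟩
  rw [inv_tau_mul_apply, inv_tau_mul_apply, tau_apply_self, tau_apply_prev]
  refine (not_lt.1 fun h => hd ⟨hk, h⟩).lt_of_ne (σ⁻¹.injective.ne fun h => ?_)
  have := congrArg Fin.val h
  simp at this
  omega

lemma IsLeftDescent.tau_mul_of_far {σ : Equiv.Perm (Fin n)} {p q : Fin n}
    (hd : IsLeftDescent σ p) (hfar : (p : ℕ) + 1 < q ∨ (q : ℕ) + 1 < p) :
    IsLeftDescent (tau q * σ) p := by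
  refine ⟨hd.1, ?_⟩
  have := hd.1
  rw [inv_tau_mul_apply, inv_tau_mul_apply, tau_apply_of_ne (by omega) (by omega),
    tau_apply_of_ne (by simp; omega) (by simp; omega)]
  exact hd.2

lemma IsLeftDescent.tau_mul_of_adjacent {σ : Equiv.Perm (Fin n)} {p q : Fin n}
    (hp : IsLeftDescent σ p) (hq : IsLeftDescent σ q) (hpq : (q : ℕ) = p + 1) :
    IsLeftDescent (tau q * σ) p ∧ IsLeftDescent (tau p * (tau q * σ)) q ∧
      IsLeftDescent (tau p * σ) q ∧ IsLeftDescent (tau q * (tau p * σ)) p := by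
  obtain ⟨hp1, hp2⟩ := hp
  obtain ⟨hq1, hq2⟩ := hq
  have hprev : prev q = p := Fin.ext (by simp [hpq])
  rw [hprev] at hq2
  have e1 : tau q p = q := hprev ▸ tau_apply_prev q
  have e2 : tau q (prev p) = prev p := tau_apply_of_ne (by simp; omega) (by simp; omega)
  have e3 : tau p q = q := tau_apply_of_ne (by omega) (by omega)
  refine ⟨⟨hp1, ?_⟩, ⟨hq1, ?_⟩, ⟨hq1, ?_⟩, ⟨hp1, ?_⟩⟩
  · rw [inv_tau_mul_apply, inv_tau_mul_apply, e1, e2]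
    exact hq2.trans hp2
  · simpa only [inv_tau_mul_apply, hprev, e3, tau_apply_self, e2] using hp2
  · rw [inv_tau_mul_apply, inv_tau_mul_apply, hprev, e3, tau_apply_self]
    exact hq2.trans hp2
  · simpa only [inv_tau_mul_apply, e1, e2, e3, tau_apply_prev] using hq2

end Descents

section PermLift

variable {G : Type*} [Group G] {n : ℕ}

/-- The Coxeter relations of type `A_{n-1}` among `b 1, …, b (n-1)`, with `b k` standing for
`tau k`; `b 0` plays no role. -/
structure SatisfiesTypeARelations (b : Fin n → G) : Prop where
  mul_self : ∀ k : Fin n, 1 ≤ (k : ℕ) → b k * b k = 1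
  comm : ∀ i j : Fin n, 1 ≤ (i : ℕ) → (i : ℕ) + 1 < j → b i * b j = b j * b i
  braid : ∀ i j : Fin n, 1 ≤ (i : ℕ) → (j : ℕ) = i + 1 →
    b i * b j * b i = b j * b i * b j

/-- A word for `σ` in the `b k`, stripping off an arbitrarily chosen left descent at each step. -/
noncomputable def permLift (b : Fin n → G) (σ : Equiv.Perm (Fin n)) : G :=
  if h : σ = 1 then 1
  else b (exists_isLeftDescent h).choose * permLift b (tau (exists_isLeftDescent h).choose * σ)
termination_by (inversions σ).card
decreasing_by exact card_inversions_tau_mul_lt (exists_isLeftDescent h).choose_spec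

variable {b : Fin n → G}

@[simp] lemma permLift_one : permLift b 1 = 1 := by
  rw [permLift, dif_pos rfl]

lemma exists_permLift_eq {σ : Equiv.Perm (Fin n)} (h : σ ≠ 1) :
    ∃ k, IsLeftDescent σ k ∧ permLift b σ = b k * permLift b (tau k * σ) :=
  ⟨_, (exists_isLeftDescent h).choose_spec, by rw [permLift, dif_neg h]⟩

lemma map_permLift {H : Type*} [Group H] (f : G →* H) (ι : Equiv.Perm (Fin n) →* H)
    (hf : ∀ k : Fin n, 1 ≤ (k : ℕ) → f (b k) = ι (tau k)) (σ : Equiv.Perm (Fin n)) :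
    f (permLift b σ) = ι σ := by
  induction σ using permLift.induct with
  | case1 => simp
  | case2 σ h ih =>
    rw [permLift, dif_neg h, map_mul, ih, hf _ (exists_isLeftDescent h).choose_spec.1, ← map_mul,
      ← mul_assoc, tau_mul_self, one_mul]

/-- The diamond step of the argument: the value of `permLift b σ` does not depend on which left
descent is peeled off first, provided this is already known for permutations with fewer
inversions. -/
lemma mul_permLift_tau_mul_eq (hb : SatisfiesTypeARelations b) {σ : Equiv.Perm (Fin n)}
    (ih : ∀ σ' : Equiv.Perm (Fin n), (inversions σ').card < (inversions σ).card →
      ∀ k, IsLeftDescent σ' k → permLift b σ' = b k * permLift b (tau k * σ'))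
    {p q : Fin n} (hp : IsLeftDescent σ p) (hq : IsLeftDescent σ q) :
    b p * permLift b (tau p * σ) = b q * permLift b (tau q * σ) := by
  wlog hlt : (p : ℕ) < q generalizing p q
  · rcases (not_lt.1 hlt).lt_or_eq with h | h
    · exact (this hq hp h).symm
    · rw [Fin.ext h]
  have hcp := card_inversions_tau_mul_lt hp
  have hcq := card_inversions_tau_mul_lt hq
  rcases (by omega : (q : ℕ) = p + 1 ∨ (p : ℕ) + 1 < q) with hpq | hpq
  · obtain ⟨hpq', hqpq, hqp, hpqp⟩ := hp.tau_mul_of_adjacent hq hpq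
    have hcqp := card_inversions_tau_mul_lt hqp
    have hcpq := card_inversions_tau_mul_lt hpq'
    rw [ih _ hcp q hqp, ih _ (hcqp.trans hcp) p hpqp, ih _ hcq p hpq',
      ih _ (hcpq.trans hcq) q hqpq]
    simp only [← mul_assoc, tau_braid hp.1 hpq, hb.braid p q hp.1 hpq]
  · rw [ih _ hcp q (hq.tau_mul_of_far (Or.inr hpq)), ih _ hcq p (hp.tau_mul_of_far (Or.inl hpq))]
    simp only [← mul_assoc, tau_mul_tau_comm hp.1 hpq, hb.comm p q hp.1 hpq]

lemma permLift_eq_of_isLeftDescent (hb : SatisfiesTypeARelations b) {σ : Equiv.Perm (Fin n)}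
    {k : Fin n} (hk : IsLeftDescent σ k) : permLift b σ = b k * permLift b (tau k * σ) := by
  induction hc : (inversions σ).card using Nat.strong_induction_on generalizing σ k with
  | _ c ih =>
    obtain ⟨k₀, hk₀, h⟩ := exists_permLift_eq (b := b) hk.ne_one
    rw [h]
    exact mul_permLift_tau_mul_eq hb (fun σ' hσ' k' hk' => ih _ (hc ▸ hσ') hk' rfl) hk₀ hk

lemma mul_permLift (hb : SatisfiesTypeARelations b) {k : Fin n} (hk : 1 ≤ (k : ℕ))
    (σ : Equiv.Perm (Fin n)) : b k * permLift b σ = permLift b (tau k * σ) := by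
  by_cases hd : IsLeftDescent σ k
  · rw [permLift_eq_of_isLeftDescent hb hd, ← mul_assoc, hb.mul_self k hk, one_mul]
  · rw [permLift_eq_of_isLeftDescent hb (isLeftDescent_tau_mul hk hd), ← mul_assoc (tau k),
      tau_mul_self, one_mul]

end PermLift

abbrev W (m n : ℕ) := PresentedGroup (Wrels m n)

def s (m : ℕ) {n : ℕ} (i : Fin n) : W m n := PresentedGroup.of i

section Relations

variable {m n : ℕ}

@[simp] lemma mk_of (i : Fin n) : PresentedGroup.mk (Wrels m n) (FreeGroup.of i) = s m i := rfl

lemma s_zero_pow (h : 0 < n) : s m ⟨0, h⟩ ^ m = 1 := by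
  simpa using PresentedGroup.one_of_mem (rels := Wrels m n) (Or.inl ⟨h, rfl⟩)

lemma s_mul_self {i : Fin n} (hi : 1 ≤ (i : ℕ)) : s m i * s m i = 1 := by
  simpa [sq] using PresentedGroup.one_of_mem (rels := Wrels m n) (Or.inr (Or.inl ⟨i, hi, rfl⟩))

lemma s_inv {i : Fin n} (hi : 1 ≤ (i : ℕ)) : (s m i)⁻¹ = s m i :=
  inv_eq_of_mul_eq_one_right (s_mul_self hi)

lemma s_zero_s_one (h : 1 < n) :
    s m ⟨0, by omega⟩ * s m ⟨1, h⟩ * s m ⟨0, by omega⟩ * s m ⟨1, h⟩ =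
      s m ⟨1, h⟩ * s m ⟨0, by omega⟩ * s m ⟨1, h⟩ * s m ⟨0, by omega⟩ := by
  simpa only [map_mul, mk_of] using
    PresentedGroup.mk_eq_mk_of_mul_inv_mem (rels := Wrels m n)
      (Or.inr (Or.inr (Or.inl ⟨h, rfl⟩)))

lemma s_comm {i j : Fin n} (hij : (i : ℕ) + 1 < j) : s m i * s m j = s m j * s m i := by
  simpa only [map_mul, mk_of] using PresentedGroup.mk_eq_mk_of_mul_inv_mem (rels := Wrels m n)
    (Or.inr (Or.inr (Or.inr (Or.inl ⟨i, j, hij, rfl⟩))))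

lemma s_braid {i j : Fin n} (hi : 1 ≤ (i : ℕ)) (hij : (j : ℕ) = i + 1) :
    s m i * s m j * s m i = s m j * s m i * s m j := by
  simpa only [map_mul, mk_of] using PresentedGroup.mk_eq_mk_of_mul_inv_mem (rels := Wrels m n)
    (Or.inr (Or.inr (Or.inr (Or.inr ⟨i, j, hi, hij, rfl⟩))))

lemma satisfiesTypeARelations_s : SatisfiesTypeARelations (s m (n := n)) :=
  ⟨fun _ => s_mul_self, fun _ _ _ => s_comm, fun _ _ => s_braid⟩

end Relations

/-- `t m n j = s_j ⋯ s_1 s_0 s_1 ⋯ s_j` generates the `j`-th factor `ℤ/mℤ`; it is `1` for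
`n ≤ j`. -/
def t (m n : ℕ) : ℕ → W m n
  | 0 => if h : 0 < n then s m ⟨0, h⟩ else 1
  | j + 1 => if h : j + 1 < n then s m ⟨j + 1, h⟩ * t m n j * s m ⟨j + 1, h⟩ else 1

section Reflections

variable {m n : ℕ}

lemma t_zero (h : 0 < n) : t m n 0 = s m ⟨0, h⟩ := dif_pos h

lemma t_succ {j : ℕ} (h : j + 1 < n) :
    t m n (j + 1) = s m ⟨j + 1, h⟩ * t m n j * s m ⟨j + 1, h⟩ := dif_pos h

lemma commute_s_t_of_lt {k : Fin n} {j : ℕ} (hj : j + 1 < k) : Commute (s m k) (t m n j) := by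
  induction j with
  | zero => rw [t_zero (by omega)]; exact (s_comm (i := ⟨0, by omega⟩) hj).symm
  | succ j ih =>
    rw [t_succ (by omega)]
    have h : Commute (s m k) (s m ⟨j + 1, by omega⟩) := (s_comm (j := k) hj).symm
    exact (h.mul_right (ih (by omega))).mul_right h

lemma commute_s_t_of_gt {k : Fin n} (hk : 1 ≤ (k : ℕ)) {j : ℕ} (hj : j < n)
    (hkj : (k : ℕ) < j) : Commute (s m k) (t m n j) := by
  induction j with
  | zero => omega
  | succ j ih =>
    rw [t_succ hj]
    rcases (by omega : (k : ℕ) < j ∨ (k : ℕ) = j) with hkj | rfl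
    · have h : Commute (s m k) (s m ⟨j + 1, hj⟩) :=
        s_comm (j := ⟨j + 1, hj⟩) (by simp; omega)
      exact (h.mul_right (ih (by omega) hkj)).mul_right h
    · obtain ⟨i, hi⟩ : ∃ i, (k : ℕ) = i + 1 := ⟨k - 1, by omega⟩
      set A := s m k
      set B := s m ⟨k + 1, hj⟩
      have hAB : A * B * A = B * A * B := s_braid hk rfl
      have hBT : B * t m n i = t m n i * B := commute_s_t_of_lt (by simp; omega)
      have hk' : k = ⟨i + 1, by omega⟩ := Fin.ext hi
      rw [hi, t_succ (by omega), ← hk']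
      calc A * (B * (A * t m n i * A) * B)
          = A * B * A * t m n i * A * B := by group
        _ = B * A * (B * t m n i) * A * B := by rw [hAB]; group
        _ = B * A * t m n i * (B * A * B) := by rw [hBT]; group
        _ = B * (A * t m n i * A) * B * A := by rw [← hAB]; group

lemma s_mul_t_mul_s {k : Fin n} (hk : 1 ≤ (k : ℕ)) (j : Fin n) :
    s m k * t m n j * s m k = t m n (tau k j) := by
  rw [val_tau_apply hk]
  split_ifs with h1 h2
  · obtain ⟨i, hi⟩ : ∃ i, (k : ℕ) = i + 1 := ⟨k - 1, by omega⟩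
    have hk' : k = ⟨i + 1, by omega⟩ := Fin.ext hi
    rw [h1, hi, t_succ (by omega), ← hk', Nat.add_sub_cancel]
    calc s m k * (s m k * t m n i * s m k) * s m k
        = s m k * s m k * t m n i * (s m k * s m k) := by group
      _ = t m n i := by rw [s_mul_self hk]; group
  · obtain ⟨i, hi⟩ : ∃ i, (k : ℕ) = i + 1 := ⟨k - 1, by omega⟩
    have hk' : k = ⟨i + 1, by omega⟩ := Fin.ext hi
    rw [h2, hi, t_succ (by omega), ← hk', Nat.add_sub_cancel]
  · have hc : Commute (s m k) (t m n j) := by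
      rcases (by omega : (j : ℕ) + 1 < k ∨ (k : ℕ) < j) with h | h
      · exact commute_s_t_of_lt h
      · exact commute_s_t_of_gt hk j.isLt h
    rw [hc.eq, mul_assoc, s_mul_self hk, mul_one]

lemma commute_t_t {i j : ℕ} (hj : j < n) (hij : i < j) : Commute (t m n i) (t m n j) := by
  induction i generalizing j with
  | zero =>
    induction j with
    | zero => omega
    | succ j ih =>
      rw [t_succ hj]
      rcases j with _ | j
      · rw [t_zero (by omega)]
        simpa only [Commute, SemiconjBy, mul_assoc] using s_zero_s_one hj
      · have h : Commute (t m n 0) (s m ⟨j + 2, hj⟩) := (commute_s_t_of_lt (by simp)).symm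
        exact (h.mul_right (ih (by omega) (by omega))).mul_right h
  | succ i ih =>
    rw [t_succ (by omega)]
    have h : Commute (s m ⟨i + 1, by omega⟩) (t m n j) := commute_s_t_of_gt (by simp) hj hij
    exact (h.mul_left (ih hj (by omega))).mul_left h

lemma t_pow {j : ℕ} (hj : j < n) : t m n j ^ m = 1 := by
  induction j with
  | zero => rw [t_zero (by omega)]; exact s_zero_pow _
  | succ j ih =>
    have hconj : t m n (j + 1) = MulAut.conj (s m ⟨j + 1, hj⟩) (t m n j) := by
      rw [t_succ hj, MulAut.conj_apply, s_inv (by simp)]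
    rw [hconj, ← map_pow, ih (by omega), map_one]

end Reflections

noncomputable def zeta (m : ℕ) {n : ℕ} (j : Fin n) : Multiplicative (ZMod m) →* W m n :=
  AddMonoidHom.toMultiplicativeLeft
    (ZMod.lift m ⟨zmultiplesHom (Additive (W m n)) (Additive.ofMul (t m n j)), by
      rw [zmultiplesHom_apply, ← ofMul_zpow, zpow_natCast, t_pow j.isLt, ofMul_one]⟩)

section Translations

variable {m n : ℕ}

lemma zeta_ofAdd_intCast (j : Fin n) (k : ℤ) :
    zeta m j (Multiplicative.ofAdd (k : ZMod m)) = t m n j ^ k := by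
  simp [zeta]

lemma exists_ofAdd_intCast_eq (y : Multiplicative (ZMod m)) :
    ∃ k : ℤ, Multiplicative.ofAdd (k : ZMod m) = y :=
  ZMod.intCast_surjective y.toAdd

lemma commute_zeta {i j : Fin n} (h : i ≠ j) (x y : Multiplicative (ZMod m)) :
    Commute (zeta m i x) (zeta m j y) := by
  obtain ⟨k, rfl⟩ := exists_ofAdd_intCast_eq x
  obtain ⟨l, rfl⟩ := exists_ofAdd_intCast_eq y
  rw [zeta_ofAdd_intCast, zeta_ofAdd_intCast]
  rcases Fin.lt_or_lt_of_ne h with hij | hij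
  · exact (commute_t_t j.isLt hij).zpow_zpow k l
  · exact (commute_t_t i.isLt hij).symm.zpow_zpow k l

lemma s_mul_zeta_mul_s {k : Fin n} (hk : 1 ≤ (k : ℕ)) (j : Fin n)
    (y : Multiplicative (ZMod m)) :
    s m k * zeta m j y * s m k = zeta m (tau k j) y := by
  obtain ⟨l, rfl⟩ := exists_ofAdd_intCast_eq y
  have hconj (g : W m n) : s m k * g * s m k = MulAut.conj (s m k) g := by
    rw [MulAut.conj_apply, s_inv hk]
  rw [zeta_ofAdd_intCast, zeta_ofAdd_intCast, hconj, map_zpow, ← hconj, s_mul_t_mul_s hk]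

end Translations

noncomputable def ofBase (m n : ℕ) : (Fin n → Multiplicative (ZMod m)) →* W m n :=
  MonoidHom.noncommPiCoprod (zeta m) fun _ _ h => commute_zeta h

section Base

variable {m n : ℕ}

lemma ofBase_mulSingle (i : Fin n) (y : Multiplicative (ZMod m)) :
    ofBase m n (Pi.mulSingle i y) = zeta m i y :=
  MonoidHom.noncommPiCoprod_mulSingle _ _ _

lemma permAct_apply (σ : Equiv.Perm (Fin n)) (x : Fin n → Multiplicative (ZMod m)) (j : Fin n) :
    permAct m n σ x j = x (σ⁻¹ j) := rfl

lemma permAct_mulSingle (σ : Equiv.Perm (Fin n)) (i : Fin n) (y : Multiplicative (ZMod m)) :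
    permAct m n σ (Pi.mulSingle i y) = Pi.mulSingle (σ i) y := by
  funext j
  simp only [permAct_apply, Pi.mulSingle_apply, Equiv.Perm.inv_eq_iff_eq]

lemma s_mul_ofBase_mul_s {k : Fin n} (hk : 1 ≤ (k : ℕ))
    (x : Fin n → Multiplicative (ZMod m)) :
    s m k * ofBase m n x * s m k = ofBase m n (permAct m n (tau k) x) := by
  have key : (MulAut.conj (s m k)).toMonoidHom.comp (ofBase m n) =
      (ofBase m n).comp (permAct m n (tau k)).toMonoidHom := by
    refine MonoidHom.pi_ext fun i y => ?_
    simp only [MonoidHom.comp_apply, MulEquiv.coe_toMonoidHom, MulAut.conj_apply, s_inv hk,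
      ofBase_mulSingle, permAct_mulSingle, s_mul_zeta_mul_s hk]
  simpa only [MonoidHom.comp_apply, MulEquiv.coe_toMonoidHom, MulAut.conj_apply, s_inv hk]
    using DFunLike.congr_fun key x

end Base

abbrev Wreath (m n : ℕ) :=
  SemidirectProduct (Fin n → Multiplicative (ZMod m)) (Equiv.Perm (Fin n)) (permAct m n)

open SemidirectProduct

def wreathGen (m : ℕ) {n : ℕ} (i : Fin n) : Wreath m n :=
  if (i : ℕ) = 0 then inl (Pi.mulSingle i (Multiplicative.ofAdd 1)) else inr (tau i)

section Wreath

variable {m n : ℕ}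

lemma wreathGen_of_ne_zero {i : Fin n} (hi : 1 ≤ (i : ℕ)) : wreathGen m i = inr (tau i) :=
  if_neg (by omega)

lemma inr_tau_mul_inr_tau (k : Fin n) : (inr (tau k) * inr (tau k) : Wreath m n) = 1 := by
  rw [← map_mul, tau_mul_self, map_one]

lemma inr_tau_mul_inl_mul_inr_tau (k : Fin n) (v : Fin n → Multiplicative (ZMod m)) :
    (inr (tau k) * inl v * inr (tau k) : Wreath m n) = inl (permAct m n (tau k) v) := by
  rw [inl_aut, tau_inv]

lemma wreathGen_rels : ∀ r ∈ Wrels m n, FreeGroup.lift (wreathGen m) r = 1 := by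
  rintro r (⟨h, rfl⟩ | ⟨i, hi, rfl⟩ | ⟨h, rfl⟩ | ⟨i, j, hij, rfl⟩ |
    ⟨i, j, hi, hij, rfl⟩)
  · rw [map_pow, FreeGroup.lift_apply_of, wreathGen, if_pos rfl, ← map_pow, ← Pi.mulSingle_pow,
      ← ofAdd_nsmul, nsmul_one, ZMod.natCast_self, ofAdd_zero, Pi.mulSingle_one, map_one]
  · rw [map_pow, FreeGroup.lift_apply_of, wreathGen_of_ne_zero hi, sq, inr_tau_mul_inr_tau]
  · simp only [map_mul, map_inv, FreeGroup.lift_apply_of]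
    rw [mul_inv_eq_one, wreathGen, wreathGen, if_pos rfl, if_neg one_ne_zero]
    set u : Fin n → Multiplicative (ZMod m) :=
      Pi.mulSingle ⟨0, by omega⟩ (Multiplicative.ofAdd 1)
    set τ := tau (⟨1, h⟩ : Fin n)
    have key := inr_tau_mul_inl_mul_inr_tau (m := m) ⟨1, h⟩ u
    calc inl u * inr τ * inl u * inr τ = inl u * (inr τ * inl u * inr τ) := by
          simp only [mul_assoc]
      _ = inr τ * inl u * inr τ * inl u := by rw [key, ← map_mul, ← map_mul, mul_comm]
  · simp only [map_mul, map_inv, FreeGroup.lift_apply_of]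
    rw [mul_inv_eq_one, wreathGen_of_ne_zero (show 1 ≤ (j : ℕ) by omega)]
    by_cases hi0 : (i : ℕ) = 0
    · rw [wreathGen, if_pos hi0]
      set u : Fin n → Multiplicative (ZMod m) := Pi.mulSingle i (Multiplicative.ofAdd 1)
      have key := inr_tau_mul_inl_mul_inr_tau (m := m) j u
      rw [permAct_mulSingle, tau_apply_of_ne (by omega) (by omega)] at key
      calc inl u * inr (tau j) = inr (tau j) * inl u * inr (tau j) * inr (tau j) := by rw [key]
        _ = inr (tau j) * inl u := by rw [mul_assoc, inr_tau_mul_inr_tau, mul_one]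
    · rw [wreathGen_of_ne_zero (show 1 ≤ (i : ℕ) by omega), ← map_mul, ← map_mul,
        tau_mul_tau_comm (by omega) hij]
  · simp only [map_mul, map_inv, FreeGroup.lift_apply_of, wreathGen_of_ne_zero hi,
      wreathGen_of_ne_zero (show 1 ≤ (j : ℕ) by omega)]
    rw [mul_inv_eq_one, ← map_mul, ← map_mul, ← map_mul, ← map_mul, tau_braid hi hij]

end Wreath

def toWreath (m n : ℕ) : W m n →* Wreath m n := PresentedGroup.toGroup wreathGen_rels

/-- The inverse of `toWreath`. -/
noncomputable def ofWreath (m n : ℕ) (g : Wreath m n) : W m n :=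
  ofBase m n g.left * permLift (s m) g.right

section Isomorphism

variable {m n : ℕ}

lemma toWreath_s (i : Fin n) : toWreath m n (s m i) = wreathGen m i :=
  PresentedGroup.toGroup.of _

lemma toWreath_t {j : ℕ} (hj : j < n) :
    toWreath m n (t m n j) = inl (Pi.mulSingle (⟨j, hj⟩ : Fin n) (Multiplicative.ofAdd 1)) := by
  induction j with
  | zero => rw [t_zero hj, toWreath_s, wreathGen, if_pos rfl]
  | succ j ih =>
    have hprev : prev (⟨j + 1, hj⟩ : Fin n) = ⟨j, by omega⟩ := rfl
    rw [t_succ hj, map_mul, map_mul, toWreath_s, ih (by omega), wreathGen_of_ne_zero (by simp),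
      inr_tau_mul_inl_mul_inr_tau, permAct_mulSingle, ← hprev, tau_apply_prev]

lemma toWreath_ofBase (x : Fin n → Multiplicative (ZMod m)) :
    toWreath m n (ofBase m n x) = inl x := by
  suffices (toWreath m n).comp (ofBase m n) = inl from DFunLike.congr_fun this x
  refine MonoidHom.pi_ext fun j y => ?_
  obtain ⟨k, rfl⟩ := exists_ofAdd_intCast_eq y
  rw [MonoidHom.comp_apply, ofBase_mulSingle, zeta_ofAdd_intCast, map_zpow, toWreath_t j.isLt,
    ← map_zpow, ← Pi.mulSingle_zpow, ← ofAdd_zsmul, zsmul_one]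

lemma toWreath_permLift (σ : Equiv.Perm (Fin n)) :
    toWreath m n (permLift (s m) σ) = inr σ :=
  map_permLift _ _ (fun _ hk => by rw [toWreath_s, wreathGen_of_ne_zero hk]) σ

lemma toWreath_ofWreath (g : Wreath m n) : toWreath m n (ofWreath m n g) = g := by
  rw [ofWreath, map_mul, toWreath_ofBase, toWreath_permLift, inl_left_mul_inr_right]

lemma ofWreath_one : ofWreath m n 1 = 1 := by
  rw [ofWreath, one_left, one_right, map_one, permLift_one, mul_one]

lemma ofWreath_toWreath_s_mul (i : Fin n) (g : Wreath m n) :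
    ofWreath m n (toWreath m n (s m i) * g) = s m i * ofWreath m n g := by
  rw [toWreath_s]
  by_cases hi : (i : ℕ) = 0
  · have hi' : i = ⟨0, by omega⟩ := Fin.ext hi
    rw [wreathGen, if_pos hi, ofWreath, ofWreath, mul_left, mul_right, left_inl, right_inl,
      map_one (permAct m n), MulAut.one_apply, one_mul, map_mul, ofBase_mulSingle, ← Int.cast_one,
      zeta_ofAdd_intCast, zpow_one, hi', t_zero, mul_assoc]
  · rw [wreathGen_of_ne_zero (by omega), ofWreath, ofWreath, mul_left, mul_right, left_inr,
      right_inr, one_mul, ← s_mul_ofBase_mul_s (by omega),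
      ← mul_permLift satisfiesTypeARelations_s (by omega)]
    calc s m i * ofBase m n g.left * s m i * (s m i * permLift (s m) g.right)
        = s m i * ofBase m n g.left * (s m i * s m i) * permLift (s m) g.right := by group
      _ = s m i * (ofBase m n g.left * permLift (s m) g.right) := by
          rw [s_mul_self (by omega)]; group

end Isomorphism

/-- the group presented by the above generators and relations (the
complex reflection group `W_{m,n}` of type `G(m,1,n)`) is isomorphic to the wreath
product `(ℤ/mℤ)^n ⋊ S_n`, where `S_n` permutes the `n` copies of `ℤ/mℤ`. -/
theorem stmt14 (m n : ℕ) :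
    Nonempty (PresentedGroup (Wrels m n) ≃*
      SemidirectProduct (Fin n → Multiplicative (ZMod m)) (Equiv.Perm (Fin n))
        (permAct m n)) := by
  have hinv : Function.LeftInverse (ofWreath m n) (toWreath m n) :=
    (toWreath m n).leftInverse_of_map_mul_generators (PresentedGroup.closure_range_of _)
      ofWreath_one (by rintro _ ⟨i, rfl⟩ g; exact ofWreath_toWreath_s_mul i g)
  exact ⟨MulEquiv.ofBijective (toWreath m n)
    ⟨hinv.injective, Function.RightInverse.surjective toWreath_ofWreath⟩⟩

end SSW
end
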